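/- arXiv:1906.01649 — 2 statements merged into one kernel-verified Lean document; each statement's English description precedes it below -/
import Mathlib

section
/- Let y : [0,∞) → ℝⁿ solve the perturbed generalized Euler equations dy_a/ds = C^c_{ba} H̃^{bd} y_c y_d + F_a(s), with C antisymmetric in (b,a), H̃ symmetric positive-definite, and |F(s)|_{H̃} ≤ Cε e^{-δs}. Then |y(s)|_{H̃} ≤ |y(0)|_{H̃} + Cε/δ for all s ≥ 0, where |x|_{H̃}² = H̃^{ab}x_a x_b. In particular, the generalized Euler asymptotic systems satisfy the boundedness-and-stability condition (Condition 1). -/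
/-!
The quadratic term of the generalized Euler equations is `H̃`-orthogonal to `y`, by the
antisymmetry of the structure constants, so `d/ds |y|² = 2⟨F, y⟩ ≤ 2 |F| |y|` and hence
`d/ds |y| ≤ |F| ≤ Cε e^{-δs}`, which integrates to the bound. Since `|y|` need not be
differentiable where `y` vanishes, the comparison is run for `√(|y|² + η)` and `η → 0⁺`.
-/

open Matrix Filter Topology

section BilinForm

variable {ι : Type*} [Fintype ι] [DecidableEq ι]

theorem Matrix.toBilin'_apply_eq_sum_sum {R : Type*} [CommSemiring R] (H : Matrix ι ι R)
    (x z : ι → R) :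
    H.toBilin' x z = ∑ a, ∑ b, H a b * x a * z b := by
  simp only [Matrix.toBilin'_apply, mul_comm (x _)]

theorem LinearMap.BilinForm.apply_le_sqrt_mul_sqrt {M : Type*} [AddCommGroup M] [Module ℝ M]
    {B : LinearMap.BilinForm ℝ M} (hs : ∀ x, 0 ≤ B x x) (hB : B.IsSymm) (x y : M) :
    B x y ≤ √(B x x) * √(B y y) := by
  rw [← Real.sqrt_mul (hs x)]
  exact (le_abs_self _).trans <| Real.abs_le_sqrt <|
    B.apply_sq_le_of_symm hs (LinearMap.BilinForm.isSymm_iff.1 hB) x y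

theorem hasDerivAt_toBilin'_self {H : Matrix ι ι ℝ} (hH : H.IsSymm) {y : ℝ → ι → ℝ}
    {y' : ι → ℝ} {s : ℝ} (hy : HasDerivAt y y' s) :
    HasDerivAt (fun t => H.toBilin' (y t) (y t)) (2 * H.toBilin' y' (y s)) s := by
  have hcoord := hasDerivAt_pi.1 hy
  have hsum : HasDerivAt (fun t => ∑ a, ∑ b, y t a * H a b * y t b)
      (∑ a, ∑ b, (y' a * H a b * y s b + y s a * H a b * y' b)) s :=
    HasDerivAt.fun_sum fun a _ => HasDerivAt.fun_sum fun b _ =>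
      ((hcoord a).mul_const (H a b)).fun_mul (hcoord b)
  convert hsum using 1
  · simp only [Matrix.toBilin'_apply]
  · rw [two_mul]
    nth_rw 2 [(Matrix.isSymm_toBilin'_iff_isSymm.2 hH).eq]
    simp only [Matrix.toBilin'_apply, ← Finset.sum_add_distrib]

end BilinForm

theorem sum_sum_mul_mul_eq_zero_of_antisymm {ι : Type*} [Fintype ι] (A : ι → ι → ℝ)
    (hA : ∀ a b, A b a = -A a b) (w : ι → ℝ) : ∑ a, ∑ b, A a b * w a * w b = 0 := by
  have h : ∑ a, ∑ b, A a b * w a * w b = -∑ a, ∑ b, A a b * w a * w b := by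
    conv_lhs => rw [Finset.sum_comm]
    simp only [← Finset.sum_neg_distrib]
    exact Finset.sum_congr rfl fun a _ => Finset.sum_congr rfl fun b _ => by rw [hA]; ring
  linarith

section Euler

variable {ι : Type*} [Fintype ι] [DecidableEq ι]

def eulerField (Cs : ι → ι → ι → ℝ) (H : Matrix ι ι ℝ) (v : ι → ℝ) : ι → ℝ :=
  fun a => ∑ b, ∑ c, ∑ d, Cs c b a * H b d * v c * v d

theorem toBilin'_eulerField_self {Cs : ι → ι → ι → ℝ} (hanti : ∀ a b c, Cs c b a = -Cs c a b)
    (H : Matrix ι ι ℝ) (v : ι → ℝ) : H.toBilin' (eulerField Cs H v) v = 0 := by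
  set A : ι → ι → ℝ := fun a b => ∑ c, Cs c b a * v c
  have hA : ∀ a b, A b a = -A a b := fun a b => by
    simp only [A, hanti a b, neg_mul, Finset.sum_neg_distrib, neg_neg]
  have hfield : ∀ a, eulerField Cs H v a = ∑ b, A a b * (H *ᵥ v) b := fun a => by
    simp only [eulerField, A, mulVec, dotProduct, Finset.sum_mul]
    simp only [Finset.mul_sum]
    exact Finset.sum_congr rfl fun _ _ => Finset.sum_congr rfl fun _ _ =>
      Finset.sum_congr rfl fun _ _ => by ring
  rw [toBilin'_apply', dotProduct, ← sum_sum_mul_mul_eq_zero_of_antisymm A hA (H *ᵥ v)]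
  simp only [hfield, Finset.sum_mul]
  exact Finset.sum_congr rfl fun _ _ => Finset.sum_congr rfl fun _ _ => by ring

theorem hasDerivAt_toBilin'_self_of_eulerField {Cs : ι → ι → ι → ℝ}
    (hanti : ∀ a b c, Cs c b a = -Cs c a b) {H : Matrix ι ι ℝ} (hH : H.IsSymm)
    {y : ℝ → ι → ℝ} {f : ι → ℝ} {s : ℝ} (hy : HasDerivAt y (eulerField Cs H (y s) + f) s) :
    HasDerivAt (fun t => H.toBilin' (y t) (y t)) (2 * H.toBilin' f (y s)) s := by
  have := hasDerivAt_toBilin'_self hH hy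
  rwa [map_add, LinearMap.add_apply, toBilin'_eulerField_self hanti, zero_add] at this

end Euler

section Comparison

variable {Q Q' B b : ℝ → ℝ}

theorem antitoneOn_sqrt_add_sub_of_hasDerivAt (hQ : ∀ t, 0 ≤ t → 0 ≤ Q t)
    (hQd : ∀ t, 0 ≤ t → HasDerivAt Q (Q' t) t) (hBd : ∀ t, 0 ≤ t → HasDerivAt B (b t) t)
    (hb : ∀ t, 0 ≤ t → 0 ≤ b t) (hQ' : ∀ t, 0 ≤ t → Q' t ≤ 2 * √(Q t) * b t)
    {η : ℝ} (hη : 0 < η) : AntitoneOn (fun t => √(Q t + η) - B t) (Set.Ici 0) := by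
  have hderiv : ∀ t, 0 ≤ t →
      HasDerivAt (fun t => √(Q t + η) - B t) (Q' t / (2 * √(Q t + η)) - b t) t :=
    fun t ht => (((hQd t ht).add_const η).sqrt (by linarith [hQ t ht])).sub (hBd t ht)
  refine antitoneOn_of_hasDerivWithinAt_nonpos (convex_Ici 0)
    (fun t ht => (hderiv t ht).continuousAt.continuousWithinAt)
    (fun t ht => (hderiv t (interior_subset ht)).hasDerivWithinAt) fun t ht => ?_
  replace ht : 0 ≤ t := interior_subset ht
  have hsqrt_le : √(Q t) ≤ √(Q t + η) := Real.sqrt_le_sqrt (by linarith)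
  have hsqrt_pos : 0 < √(Q t + η) := Real.sqrt_pos.2 (by linarith [hQ t ht])
  rw [sub_nonpos, div_le_iff₀ (by positivity)]
  nlinarith [hQ' t ht, hb t ht]

theorem sqrt_le_sqrt_add_sub_of_hasDerivAt (hQ : ∀ t, 0 ≤ t → 0 ≤ Q t)
    (hQd : ∀ t, 0 ≤ t → HasDerivAt Q (Q' t) t) (hBd : ∀ t, 0 ≤ t → HasDerivAt B (b t) t)
    (hb : ∀ t, 0 ≤ t → 0 ≤ b t) (hQ' : ∀ t, 0 ≤ t → Q' t ≤ 2 * √(Q t) * b t)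
    {s : ℝ} (hs : 0 ≤ s) : √(Q s) ≤ √(Q 0) + (B s - B 0) := by
  have hη : ∀ η > 0, √(Q s) ≤ √(Q 0 + η) + (B s - B 0) := fun η hη => by
    have hanti := antitoneOn_sqrt_add_sub_of_hasDerivAt hQ hQd hBd hb hQ' hη
      Set.self_mem_Ici hs hs
    have : √(Q s) ≤ √(Q s + η) := Real.sqrt_le_sqrt (by linarith)
    simp only at hanti
    linarith
  have hlim : Tendsto (fun η => √(Q 0 + η) + (B s - B 0)) (𝓝[>] 0)
      (𝓝 (√(Q 0) + (B s - B 0))) := by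
    have hcont : Continuous fun η => √(Q 0 + η) + (B s - B 0) := by fun_prop
    simpa using (hcont.tendsto 0).mono_left nhdsWithin_le_nhds
  exact ge_of_tendsto hlim (eventually_nhdsWithin_of_forall hη)

theorem hasDerivAt_neg_div_mul_exp_neg_mul (c : ℝ) {δ : ℝ} (hδ : δ ≠ 0) (t : ℝ) :
    HasDerivAt (fun t => -(c / δ) * Real.exp (-δ * t)) (c * Real.exp (-δ * t)) t := by
  refine ((((hasDerivAt_id' t).const_mul (-δ)).exp).const_mul (-(c / δ))).congr_deriv ?_
  field_simp

end Comparison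

theorem stmt10_general (n : ℕ) (Cs : Fin n → Fin n → Fin n → ℝ) (H : Fin n → Fin n → ℝ)
    (hanti : ∀ a b c, Cs c b a = - Cs c a b)
    (hsym : ∀ a b, H a b = H b a)
    (hpos : ∀ x : Fin n → ℝ, x ≠ 0 → 0 < ∑ a, ∑ b, H a b * x a * x b)
    (C ε δ : ℝ) (hδ : 0 < δ)
    (F : ℝ → Fin n → ℝ) (y : ℝ → Fin n → ℝ)
    (hode : ∀ a s, 0 ≤ s → HasDerivAt (fun t => y t a)
      ((∑ b, ∑ c, ∑ d, Cs c b a * H b d * y s c * y s d) + F s a) s)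
    (hF : ∀ s, 0 ≤ s →
      Real.sqrt (∑ a, ∑ b, H a b * F s a * F s b) ≤ C * ε * Real.exp (-δ * s)) :
    ∀ s, 0 ≤ s →
      Real.sqrt (∑ a, ∑ b, H a b * y s a * y s b) ≤
        Real.sqrt (∑ a, ∑ b, H a b * y 0 a * y 0 b) + C * ε / δ := by
  set M : Matrix (Fin n) (Fin n) ℝ := Matrix.of H
  have hform : ∀ x z, ∑ a, ∑ b, H a b * x a * z b = M.toBilin' x z :=
    fun x z => (M.toBilin'_apply_eq_sum_sum x z).symm
  simp only [hform] at hpos hF ⊢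
  have hM : M.IsSymm := Matrix.IsSymm.ext fun a b => hsym b a
  set B := M.toBilin'
  have hnonneg : ∀ x, 0 ≤ B x x := fun x => by
    rcases eq_or_ne x 0 with rfl | hx
    · simp
    · exact (hpos x hx).le
  have hforce_nonneg : ∀ t, 0 ≤ t → 0 ≤ C * ε * Real.exp (-δ * t) :=
    fun t ht => (Real.sqrt_nonneg _).trans (hF t ht)
  have henergy : ∀ t, 0 ≤ t → HasDerivAt (fun t => B (y t) (y t)) (2 * B (F t) (y t)) t :=
    fun t ht => hasDerivAt_toBilin'_self_of_eulerField hanti hM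
      (hasDerivAt_pi.2 fun a => hode a t ht)
  have hpower : ∀ t, 0 ≤ t →
      2 * B (F t) (y t) ≤ 2 * √(B (y t) (y t)) * (C * ε * Real.exp (-δ * t)) := fun t ht => by
    have := B.apply_le_sqrt_mul_sqrt hnonneg (Matrix.isSymm_toBilin'_iff_isSymm.2 hM) (F t) (y t)
    nlinarith [hF t ht, Real.sqrt_nonneg (B (y t) (y t))]
  have hCε : 0 ≤ C * ε := by simpa using hforce_nonneg 0 le_rfl
  intro s hs
  calc √(B (y s) (y s))
      ≤ √(B (y 0) (y 0)) +
          (-(C * ε / δ) * Real.exp (-δ * s) - -(C * ε / δ) * Real.exp (-δ * 0)) :=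
        sqrt_le_sqrt_add_sub_of_hasDerivAt (fun t _ => hnonneg _) henergy
          (fun t _ => hasDerivAt_neg_div_mul_exp_neg_mul _ hδ.ne' t) hforce_nonneg hpower hs
    _ ≤ √(B (y 0) (y 0)) + C * ε / δ := by
        have := mul_nonneg (div_nonneg hCε hδ.le) (Real.exp_pos (-δ * s)).le
        simp only [mul_zero, Real.exp_zero, mul_one]
        linarith

/-- Perturbed generalized Euler equations: if |F(s)|_{H̃} ≤ Cε e^{-δs} then
|y(s)|_{H̃} ≤ |y(0)|_{H̃} + Cε/δ for all s ≥ 0, so the boundedness-and-stability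
condition holds. -/
theorem stmt10 (n : ℕ) (Cs : Fin n → Fin n → Fin n → ℝ) (H : Fin n → Fin n → ℝ)
    (hanti : ∀ a b c, Cs c b a = - Cs c a b)
    (hsym : ∀ a b, H a b = H b a)
    (hpos : ∀ x : Fin n → ℝ, x ≠ 0 → 0 < ∑ a, ∑ b, H a b * x a * x b)
    (C ε δ : ℝ) (hC : 0 < C) (hε : 0 < ε) (hδ : 0 < δ)
    (F : ℝ → Fin n → ℝ) (hFcont : Continuous F) (y : ℝ → Fin n → ℝ)
    (hode : ∀ a s, 0 ≤ s → HasDerivAt (fun t => y t a)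
      ((∑ b, ∑ c, ∑ d, Cs c b a * H b d * y s c * y s d) + F s a) s)
    (hF : ∀ s, 0 ≤ s →
      Real.sqrt (∑ a, ∑ b, H a b * F s a * F s b) ≤ C * ε * Real.exp (-δ * s)) :
    ∀ s, 0 ≤ s →
      Real.sqrt (∑ a, ∑ b, H a b * y s a * y s b) ≤
        Real.sqrt (∑ a, ∑ b, H a b * y 0 a * y 0 b) + C * ε / δ :=
  stmt10_general n Cs H hanti hsym hpos C ε δ hδ F y hode hF
end

section
/- Let y : [0,∞) → ℝⁿ be differentiable with |y'(s) - Q(y(s),y(s))| ≤ g(s) where ⟨x,Q(x,x)⟩ = 0 for all x, g continuous nonnegative with ∫₀^∞ g < ∞. Then y is bounded on [0,∞) and lim sup_{s→∞} |y(s)| ≤ |y(0)| + ∫₀^∞ g(u)du, while lim inf_{s→∞} |y(s)| ≥ |y(0)| - ∫₀^∞ g(u)du; in particular | |y(s)| - |y(0)| | ≤ ∫₀^∞ g for all s. -/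
/-!
Orthogonality `⟪x, Q(x, x)⟫ = 0` makes the quadratic term invisible to the norm:
`⟪y', y⟫ = ⟪y' - Q(y, y), y⟫`, so `|⟪y', y⟫| ≤ g ‖y‖`, i.e. `‖y‖` changes at rate at most `g`.
Integrating gives `|‖y s‖ - ‖y 0‖| ≤ ∫₀ˢ g ≤ ∫₀^∞ g`, and the limsup/liminf bounds follow.
-/

open Set Filter MeasureTheory
open scoped RealInnerProductSpace

theorem abs_sub_le_intervalIntegral_of_abs_deriv_le {φ φ' g : ℝ → ℝ} {a b : ℝ} (hab : a ≤ b)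
    (hg : Continuous g) (hφ : ∀ t ∈ Icc a b, HasDerivAt φ (φ' t) t)
    (bound : ∀ t ∈ Ico a b, |φ' t| ≤ g t) :
    |φ b - φ a| ≤ ∫ t in a..b, g t := by
  have := image_norm_le_of_norm_deriv_right_le_deriv_boundary (f := fun t => φ t - φ a)
    (fun t ht => ((hφ t ht).continuousAt.sub continuousAt_const).continuousWithinAt)
    (fun t ht => ((hφ t (Ico_subset_Icc_self ht)).sub_const (φ a)).hasDerivWithinAt)
    (by simp) (fun t => (hg.integral_hasStrictDerivAt a t).hasDerivAt) bound
    (right_mem_Icc.2 hab)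
  simpa only [Real.norm_eq_abs] using this

section InnerProductSpace

variable {E : Type*} [NormedAddCommGroup E] [InnerProductSpace ℝ E]

theorem abs_inner_le_of_norm_sub_le {v w x : E} {c : ℝ} (hw : ⟪w, x⟫ = 0) (hv : ‖v - w‖ ≤ c) :
    |⟪v, x⟫| ≤ c * ‖x‖ :=
  calc |⟪v, x⟫| = |⟪v - w, x⟫| := by rw [inner_sub_left, hw, sub_zero]
    _ ≤ ‖v - w‖ * ‖x‖ := abs_real_inner_le_norm _ _
    _ ≤ c * ‖x‖ := mul_le_mul_of_nonneg_right hv (norm_nonneg x)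

theorem HasDerivAt.sqrt_norm_sq_add_sq {y : ℝ → E} {y' : E} {t : ℝ} (hy : HasDerivAt y y' t)
    {ε : ℝ} (hε : ε ≠ 0) :
    HasDerivAt (fun s => √(‖y s‖ ^ 2 + ε ^ 2)) (⟪y', y t⟫ / √(‖y t‖ ^ 2 + ε ^ 2)) t := by
  convert (hy.norm_sq.add_const (ε ^ 2)).sqrt (by positivity) using 1
  rw [real_inner_comm]
  field_simp

theorem abs_norm_sub_norm_le_intervalIntegral_of_abs_inner_le {y y' : ℝ → E} {g : ℝ → ℝ}
    {a b : ℝ} (hab : a ≤ b) (hg : Continuous g) (hg0 : ∀ t ∈ Ico a b, 0 ≤ g t)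
    (hy : ∀ t ∈ Icc a b, HasDerivAt y (y' t) t)
    (bound : ∀ t ∈ Ico a b, |⟪y' t, y t⟫| ≤ g t * ‖y t‖) :
    |‖y b‖ - ‖y a‖| ≤ ∫ t in a..b, g t := by
  -- `‖y‖` need not be differentiable where `y` vanishes; `√(‖y‖² + ε²)` is, and lies within `ε`.
  refine le_of_forall_pos_le_add fun ε hε => ?_
  set φ : ℝ → ℝ := fun t => √(‖y t‖ ^ 2 + ε ^ 2)
  have hφ_pos (t : ℝ) : 0 < φ t := by positivity
  have norm_le_φ (t : ℝ) : ‖y t‖ ≤ φ t :=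
    (le_abs_self _).trans (Real.abs_le_sqrt (by nlinarith))
  have φ_le_norm_add (t : ℝ) : φ t ≤ ‖y t‖ + ε :=
    Real.sqrt_le_iff.2 ⟨by positivity, by nlinarith [norm_nonneg (y t)]⟩
  have hφ := abs_sub_le_intervalIntegral_of_abs_deriv_le hab hg
    (fun t ht => (hy t ht).sqrt_norm_sq_add_sq hε.ne') fun t ht => by
      rw [abs_div, abs_of_pos (hφ_pos t), div_le_iff₀ (hφ_pos t)]
      exact (bound t ht).trans (mul_le_mul_of_nonneg_left (norm_le_φ t) (hg0 t ht))
  rw [abs_le] at hφ ⊢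
  constructor <;> linarith [norm_le_φ a, norm_le_φ b, φ_le_norm_add a, φ_le_norm_add b]

end InnerProductSpace

theorem intervalIntegral_le_integral_Ioi {g : ℝ → ℝ} {a b : ℝ} (hab : a ≤ b)
    (hg0 : ∀ t ∈ Ioi a, 0 ≤ g t) (hg : IntegrableOn g (Ioi a)) :
    ∫ t in a..b, g t ≤ ∫ t in Ioi a, g t := by
  rw [intervalIntegral.integral_of_le hab]
  exact setIntegral_mono_set hg (ae_restrict_of_forall_mem measurableSet_Ioi hg0)
    (Eventually.of_forall Ioc_subset_Ioi_self)

/-- Differential-inequality version of perturbation stability: if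
‖y'(s) - Q(y(s),y(s))‖ ≤ g(s) with ⟨x,Q(x,x)⟩ = 0 and ∫₀^∞ g < ∞, then
|‖y(s)‖ - ‖y(0)‖| ≤ ∫₀^∞ g for all s ≥ 0, with corresponding limsup/liminf bounds. -/
theorem stmt19 {E : Type*} [NormedAddCommGroup E] [InnerProductSpace ℝ E]
    (Q : E →ₗ[ℝ] E →ₗ[ℝ] E) (hQ : ∀ x : E, (inner ℝ x (Q x x) : ℝ) = 0)
    (g : ℝ → ℝ) (hg : Continuous g) (hg0 : ∀ s, 0 ≤ g s)
    (hgint : MeasureTheory.IntegrableOn g (Set.Ioi 0))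
    (y : ℝ → E) (hy : Differentiable ℝ y)
    (hineq : ∀ s, 0 ≤ s → ‖deriv y s - Q (y s) (y s)‖ ≤ g s) :
    (∀ s, 0 ≤ s → |‖y s‖ - ‖y 0‖| ≤ ∫ u in Set.Ioi (0:ℝ), g u) ∧
    Filter.limsup (fun s => ‖y s‖) Filter.atTop ≤ ‖y 0‖ + ∫ u in Set.Ioi (0:ℝ), g u ∧
    ‖y 0‖ - ∫ u in Set.Ioi (0:ℝ), g u ≤ Filter.liminf (fun s => ‖y s‖) Filter.atTop := by
  set I := ∫ u in Ioi (0:ℝ), g u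
  have abs_norm_sub_le (s : ℝ) (hs : 0 ≤ s) : |‖y s‖ - ‖y 0‖| ≤ I :=
    (abs_norm_sub_norm_le_intervalIntegral_of_abs_inner_le hs hg (fun t _ => hg0 t)
      (fun t _ => (hy t).hasDerivAt) fun t ht =>
        abs_inner_le_of_norm_sub_le (by rw [real_inner_comm, hQ]) (hineq t ht.1)).trans
      (intervalIntegral_le_integral_Ioi hs (fun t _ => hg0 t) hgint)
  have upper : ∀ᶠ s in atTop, ‖y s‖ ≤ ‖y 0‖ + I := by
    filter_upwards [eventually_ge_atTop 0] with s hs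
    linarith [(abs_le.1 (abs_norm_sub_le s hs)).2]
  have lower : ∀ᶠ s in atTop, ‖y 0‖ - I ≤ ‖y s‖ := by
    filter_upwards [eventually_ge_atTop 0] with s hs
    linarith [(abs_le.1 (abs_norm_sub_le s hs)).1]
  exact ⟨abs_norm_sub_le,
    limsup_le_of_le (isCoboundedUnder_le_of_le atTop fun s => norm_nonneg _) upper,
    le_liminf_of_le (isCoboundedUnder_ge_of_eventually_le atTop upper) lower⟩
end
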